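/- Let c ∈ (0,√2), ξ ∈ (0, c⁴/4), θ ∈ ℝ, and set s = √(c⁴ − 4ξ). Define G = (ξ − 1)(c² + s + 2θ²ξ)/(ξ·(c⁴ − 4ξ)·(−c² + s)) and D = (ξ − 1)(−c² + s − 2θ²ξ)/(ξ·(c⁴ − 4ξ)·(c² + s)). Then G > 0, D > 0, and G > D. -/

import Mathlib

open Real

/-!
Write `a = c²`, `t = 2θ²ξ` and `K = (1 - ξ) / (ξ (c⁴ - 4ξ))`. Then
`G = K (a + s + t) / (a - s)` and `D = K (a - s + t) / (a + s)`.
Since `c² < 2` forces `ξ < c⁴/4 < 1`, and `0 < s < a`, the factor `K` is positive, and the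
first fraction has the larger numerator and the smaller positive denominator.
-/

lemma div_add_lt_div_sub {a s t : ℝ} (hs : 0 < s) (hsa : s < a) (ht : 0 ≤ t) :
    (a - s + t) / (a + s) < (a + s + t) / (a - s) :=
  div_lt_div₀ (by linarith) (by linarith) (by linarith) (by linarith)

lemma sqrt_sq_sub_lt {a ε : ℝ} (ha : 0 < a) (hε : 0 < ε) : √(a ^ 2 - ε) < a :=
  (Real.sqrt_lt' ha).2 (by linarith)

theorem stmt6 (c ξ θ : ℝ) (hc : c ∈ Set.Ioo 0 (Real.sqrt 2))
    (hξ : ξ ∈ Set.Ioo 0 (c ^ 4 / 4))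
    (s G D : ℝ) (hs : s = Real.sqrt (c ^ 4 - 4 * ξ))
    (hG : G = (ξ - 1) * (c ^ 2 + s + 2 * θ ^ 2 * ξ) / (ξ * (c ^ 4 - 4 * ξ) * (-c ^ 2 + s)))
    (hD : D = (ξ - 1) * (-c ^ 2 + s - 2 * θ ^ 2 * ξ) / (ξ * (c ^ 4 - 4 * ξ) * (c ^ 2 + s))) :
    G > 0 ∧ D > 0 ∧ G > D := by
  obtain ⟨hc0, hc_lt_sqrt⟩ := hc
  obtain ⟨hξ0, hξc⟩ := hξ
  have hc2 : c ^ 2 < 2 := (Real.lt_sqrt hc0.le).1 hc_lt_sqrt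
  have hξ1 : ξ < 1 := by nlinarith
  have hq : 0 < c ^ 4 - 4 * ξ := by linarith
  have hs0 : 0 < s := hs ▸ Real.sqrt_pos.2 hq
  have hsc : s < c ^ 2 := by
    rw [hs, show c ^ 4 = (c ^ 2) ^ 2 by ring]
    exact sqrt_sq_sub_lt (by positivity) (by positivity)
  set t := 2 * θ ^ 2 * ξ
  set K := (1 - ξ) / (ξ * (c ^ 4 - 4 * ξ)) with hK_def
  have hK : 0 < K := div_pos (by linarith) (by positivity)
  have hG' : G = K * ((c ^ 2 + s + t) / (c ^ 2 - s)) := by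
    have : c ^ 2 - s ≠ 0 := by linarith
    have : -c ^ 2 + s ≠ 0 := by linarith
    rw [hG, hK_def]; field_simp; ring
  have hD' : D = K * ((c ^ 2 - s + t) / (c ^ 2 + s)) := by
    have : c ^ 2 + s ≠ 0 := by linarith
    rw [hD, hK_def]; field_simp; ring
  have ht : 0 ≤ t := by positivity
  refine ⟨?_, ?_, ?_⟩
  · rw [hG']; exact mul_pos hK (div_pos (by linarith) (by linarith))
  · rw [hD']; exact mul_pos hK (div_pos (by linarith) (by linarith))
  · rw [hG', hD']; exact mul_lt_mul_of_pos_left (div_add_lt_div_sub hs0 hsc ht) hK
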